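/- For Z = hḡ⁻¹ coming from (g, h; h̄, ḡ) ∈ Sp_res(V,Ω), one has id_{H₊} − ZZ̄ = (g*)⁻¹g⁻¹ and (id_{H₋} − Z*Z)⁻¹ = ḡgᵀ. -/

import Mathlib

/- Setting: `H = H₊ ⊕ H₋` is a separable complex Hilbert space. We model the two summands
as complex Hilbert spaces `Hp`, `Hm` and operators on `H` by their four blocks, or work on a
single Hilbert space `H` with orthogonal projections `p₊, p₋`. The antilinear conjugation
exchanging `H₊` and `H₋` is modeled as a conjugate-linear isometric equivalence
`c : Hp ≃ₛₗᵢ[starRingEnd ℂ] Hm`. -/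

noncomputable section
open ContinuousLinearMap Complex
open scoped InnerProductSpace ComplexOrder

instance : RingHomCompTriple (starRingEnd ℂ) (starRingEnd ℂ) (RingHom.id ℂ) :=
  ⟨RingHom.ext fun z => Complex.conj_conj z⟩

/-- A bounded operator between complex Hilbert spaces is Hilbert–Schmidt if for every
Hilbert basis, the sum of the squared norms of the images of the basis vectors is finite. -/
def IsHS {E F : Type} [NormedAddCommGroup E] [InnerProductSpace ℂ E]
    [NormedAddCommGroup F] [InnerProductSpace ℂ F] (T : E →L[ℂ] F) : Prop :=
  ∀ b : HilbertBasis ℕ ℂ E, Summable fun i => ‖T (b i)‖ ^ 2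

/-- The conjugate `T̄` (defined by `T̄ u = conj (T ū)`) of an operator, with respect to
antilinear conjugations `cA`, `cB` on the domain and codomain. -/
def opBar {A A' B B' : Type} [NormedAddCommGroup A] [InnerProductSpace ℂ A]
    [NormedAddCommGroup A'] [InnerProductSpace ℂ A']
    [NormedAddCommGroup B] [InnerProductSpace ℂ B]
    [NormedAddCommGroup B'] [InnerProductSpace ℂ B']
    (cA : A ≃ₛₗᵢ[starRingEnd ℂ] A') (cB : B ≃ₛₗᵢ[starRingEnd ℂ] B')
    (T : A →L[ℂ] B) : A' →L[ℂ] B' :=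
  cB.toLinearIsometry.toContinuousLinearMap.comp
    (T.comp cA.symm.toLinearIsometry.toContinuousLinearMap)

/-- Fredholm operator: finite-dimensional kernel and cokernel. -/
def IsFredholm {E F : Type} [NormedAddCommGroup E] [NormedSpace ℂ E]
    [NormedAddCommGroup F] [NormedSpace ℂ F] (T : E →L[ℂ] F) : Prop :=
  FiniteDimensional ℂ (LinearMap.ker (T : E →ₗ[ℂ] F)) ∧ FiniteDimensional ℂ (F ⧸ LinearMap.range (T : E →ₗ[ℂ] F))

/-- Fredholm index `Ind T = dim ker T − codim range T`. -/
def fredholmIndex {E F : Type} [NormedAddCommGroup E] [NormedSpace ℂ E]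
    [NormedAddCommGroup F] [NormedSpace ℂ F] (T : E →L[ℂ] F) : ℤ :=
  (Module.finrank ℂ (LinearMap.ker (T : E →ₗ[ℂ] F)) : ℤ) - Module.finrank ℂ (F ⧸ LinearMap.range (T : E →ₗ[ℂ] F))

variable {Hp Hm : Type} [NormedAddCommGroup Hp] [InnerProductSpace ℂ Hp] [CompleteSpace Hp]
  [NormedAddCommGroup Hm] [InnerProductSpace ℂ Hm] [CompleteSpace Hm]

/-- `Zᵀ := (Z̄)*` for `Z : H₋ → H₊`. -/
def opTrans (c : Hp ≃ₛₗᵢ[starRingEnd ℂ] Hm) (Z : Hm →L[ℂ] Hp) : Hm →L[ℂ] Hp :=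
  adjoint (opBar c.symm c Z)

/-- `ḡ : H₋ → H₋` for `g : H₊ → H₊`. -/
def barP (c : Hp ≃ₛₗᵢ[starRingEnd ℂ] Hm) (g : Hp →L[ℂ] Hp) : Hm →L[ℂ] Hm :=
  opBar c c g

/-- `h̄ : H₊ → H₋` for `h : H₋ → H₊`. -/
def barM (c : Hp ≃ₛₗᵢ[starRingEnd ℂ] Hm) (h : Hm →L[ℂ] Hp) : Hp →L[ℂ] Hm :=
  opBar c.symm c h

/-- `gᵀ := (ḡ)* : H₋ → H₋` for `g : H₊ → H₊`. -/
def transP (c : Hp ≃ₛₗᵢ[starRingEnd ℂ] Hm) (g : Hp →L[ℂ] Hp) : Hm →L[ℂ] Hm :=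
  adjoint (barP c g)

/-- The conditions on the blocks `(g, h; h̄, ḡ)` characterizing elements of `Sp(V,Ω)`:
`g*g − hᵀh̄ = id`, `g*h = hᵀḡ`, `gg* − hh* = id`, `ghᵀ = hgᵀ`. -/
def SympBlocks (c : Hp ≃ₛₗᵢ[starRingEnd ℂ] Hm) (g : Hp →L[ℂ] Hp) (h : Hm →L[ℂ] Hp) : Prop :=
  (adjoint g) ∘L g - (opTrans c h) ∘L (barM c h) = 1 ∧
  (adjoint g) ∘L h = (opTrans c h) ∘L (barP c g) ∧
  g ∘L (adjoint g) - h ∘L (adjoint h) = 1 ∧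
  g ∘L (opTrans c h) = h ∘L (transP c g)

/-- Membership in the restricted Siegel disc:
`Z` Hilbert–Schmidt, `Zᵀ = Z`, and `id − Z*Z ≻ 0`. -/
def InDres (c : Hp ≃ₛₗᵢ[starRingEnd ℂ] Hm) (Z : Hm →L[ℂ] Hp) : Prop :=
  IsHS Z ∧ opTrans c Z = Z ∧
    ∀ u : Hm, u ≠ 0 → 0 < ⟪u, (1 - (adjoint Z) ∘L Z) u⟫_ℂ

/-- The action `ρ((g,h;h̄,ḡ), Z) = (gZ + h)(h̄Z + ḡ)⁻¹`. -/
def rho (c : Hp ≃ₛₗᵢ[starRingEnd ℂ] Hm) (g : Hp →L[ℂ] Hp) (h : Hm →L[ℂ] Hp)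
    (Z : Hm →L[ℂ] Hp) : Hm →L[ℂ] Hp :=
  (g ∘L Z + h) ∘L Ring.inverse ((barM c h) ∘L Z + (barP c g))


section Aux16
variable {A A' B B' C C' : Type}
  [NormedAddCommGroup A] [InnerProductSpace ℂ A] [NormedAddCommGroup A'] [InnerProductSpace ℂ A']
  [NormedAddCommGroup B] [InnerProductSpace ℂ B] [NormedAddCommGroup B'] [InnerProductSpace ℂ B']
  [NormedAddCommGroup C] [InnerProductSpace ℂ C] [NormedAddCommGroup C'] [InnerProductSpace ℂ C']

lemma opBar_apply (cA : A ≃ₛₗᵢ[starRingEnd ℂ] A') (cB : B ≃ₛₗᵢ[starRingEnd ℂ] B')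
    (T : A →L[ℂ] B) (u : A') : opBar cA cB T u = cB (T (cA.symm u)) := rfl

lemma conj_inner_map (c : A ≃ₛₗᵢ[starRingEnd ℂ] A') (x y : A) :
    ⟪c x, c y⟫_ℂ = ⟪y, x⟫_ℂ := by
  have e1 : ‖c x + c y‖ = ‖y + x‖ := by rw [← map_add, c.norm_map, add_comm]
  have e2 : ‖c x - c y‖ = ‖y - x‖ := by rw [← map_sub, c.norm_map, norm_sub_rev]
  have e3 : ‖c x - Complex.I • c y‖ = ‖y - Complex.I • x‖ := by
    have h1 : c x - Complex.I • c y = c (x + Complex.I • y) := by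
      rw [map_add, c.map_smulₛₗ, Complex.conj_I, neg_smul, sub_eq_add_neg]
    have h2 : Complex.I • (x + Complex.I • y) = -(y - Complex.I • x) := by
      rw [smul_add, smul_smul, Complex.I_mul_I, neg_one_smul, neg_sub]; abel
    calc ‖c x - Complex.I • c y‖ = ‖x + Complex.I • y‖ := by rw [h1, c.norm_map]
      _ = ‖Complex.I • (x + Complex.I • y)‖ := by
          rw [norm_smul, Complex.norm_I, one_mul]
      _ = ‖y - Complex.I • x‖ := by rw [h2, norm_neg]
  have e4 : ‖c x + Complex.I • c y‖ = ‖y + Complex.I • x‖ := by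
    have h1 : c x + Complex.I • c y = c (x - Complex.I • y) := by
      rw [map_sub, c.map_smulₛₗ, Complex.conj_I, neg_smul, sub_neg_eq_add]
    have h2 : Complex.I • (x - Complex.I • y) = -(-(y + Complex.I • x)) := by
      rw [smul_sub, smul_smul, Complex.I_mul_I, neg_one_smul]; abel
    calc ‖c x + Complex.I • c y‖ = ‖x - Complex.I • y‖ := by rw [h1, c.norm_map]
      _ = ‖Complex.I • (x - Complex.I • y)‖ := by
          rw [norm_smul, Complex.norm_I, one_mul]
      _ = ‖y + Complex.I • x‖ := by rw [h2, norm_neg, norm_neg]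
  rw [inner_eq_sum_norm_sq_div_four, inner_eq_sum_norm_sq_div_four]
  simp only [show (RCLike.I : ℂ) = Complex.I from rfl]
  rw [e1, e2, e3, e4]

lemma adjoint_opBar [CompleteSpace A] [CompleteSpace A'] [CompleteSpace B] [CompleteSpace B']
    (cA : A ≃ₛₗᵢ[starRingEnd ℂ] A') (cB : B ≃ₛₗᵢ[starRingEnd ℂ] B') (T : A →L[ℂ] B) :
    adjoint (opBar cA cB T) = opBar cB cA (adjoint T) := by
  ext u
  apply ext_inner_right ℂ
  intro v
  rw [ContinuousLinearMap.adjoint_inner_left, opBar_apply, opBar_apply]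
  calc ⟪u, cB (T (cA.symm v))⟫_ℂ
      = ⟪cB (cB.symm u), cB (T (cA.symm v))⟫_ℂ := by rw [cB.apply_symm_apply]
    _ = ⟪T (cA.symm v), cB.symm u⟫_ℂ := conj_inner_map cB _ _
    _ = ⟪cA.symm v, adjoint T (cB.symm u)⟫_ℂ := by
        rw [ContinuousLinearMap.adjoint_inner_right]
    _ = ⟪cA (adjoint T (cB.symm u)), cA (cA.symm v)⟫_ℂ := (conj_inner_map cA _ _).symm
    _ = ⟪cA (adjoint T (cB.symm u)), v⟫_ℂ := by rw [cA.apply_symm_apply]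

lemma opBar_comp (cA : A ≃ₛₗᵢ[starRingEnd ℂ] A') (cB : B ≃ₛₗᵢ[starRingEnd ℂ] B')
    (cC : C ≃ₛₗᵢ[starRingEnd ℂ] C') (S : B →L[ℂ] C) (T : A →L[ℂ] B) :
    opBar cA cC (S ∘L T) = opBar cB cC S ∘L opBar cA cB T := by
  ext u; simp [opBar_apply]

lemma opBar_one (cA : A ≃ₛₗᵢ[starRingEnd ℂ] A') : opBar cA cA (1 : A →L[ℂ] A) = 1 := by
  ext u; simp [opBar_apply]

lemma opBar_sub (cA : A ≃ₛₗᵢ[starRingEnd ℂ] A') (cB : B ≃ₛₗᵢ[starRingEnd ℂ] B')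
    (S T : A →L[ℂ] B) : opBar cA cB (S - T) = opBar cA cB S - opBar cA cB T := by
  ext u; simp [opBar_apply]

lemma opBar_opBar (cA : A ≃ₛₗᵢ[starRingEnd ℂ] A') (cB : B ≃ₛₗᵢ[starRingEnd ℂ] B')
    (T : A →L[ℂ] B) : opBar cA.symm cB.symm (opBar cA cB T) = T := by
  ext u; simp [opBar_apply]

lemma ring_inverse_eq' {M : Type} [MonoidWithZero M] {a b : M}
    (h1 : a * b = 1) (h2 : b * a = 1) : Ring.inverse a = b := by
  simpa using Ring.inverse_unit ⟨a, b, h1, h2⟩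

lemma clm_comp_one (f : A →L[ℂ] B) : f ∘L (1 : A →L[ℂ] A) = f := by ext u; simp
lemma clm_one_comp (f : A →L[ℂ] B) : (1 : B →L[ℂ] B) ∘L f = f := by ext u; simp

lemma adjoint_inv_pair {E : Type} [NormedAddCommGroup E] [InnerProductSpace ℂ E] [CompleteSpace E]
    {a b : E →L[ℂ] E} (hab : a ∘L b = 1) : adjoint b ∘L adjoint a = 1 := by
  rw [← ContinuousLinearMap.adjoint_comp, hab, ContinuousLinearMap.one_def,
    ContinuousLinearMap.adjoint_id, ← ContinuousLinearMap.one_def]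

lemma sub_flip_helper {G : Type} [AddCommGroup G] {a b c : G} (h : a - b = c) : b = a - c := by
  rw [← h]; abel

end Aux16

set_option maxHeartbeats 2000000 in
/-- for `Z = hḡ⁻¹` with `(g, h; h̄, ḡ) ∈ Sp_res(V,Ω)`, one has
`id − ZZ̄ = (g*)⁻¹g⁻¹` and `(id − Z*Z)⁻¹ = ḡgᵀ`. -/
theorem statement16 (c : Hp ≃ₛₗᵢ[starRingEnd ℂ] Hm) (g : Hp →L[ℂ] Hp) (h : Hm →L[ℂ] Hp)
    (hs : SympBlocks c g h) (hHS : IsHS h)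
    (hg : IsUnit g) (hgbar : IsUnit (barP c g))
    (Z : Hm →L[ℂ] Hp) (hZdef : Z = h ∘L Ring.inverse (barP c g)) :
    (1 : Hp →L[ℂ] Hp) - Z ∘L barM c Z = Ring.inverse (adjoint g) * Ring.inverse g ∧
    ((1 : Hm →L[ℂ] Hm) - (adjoint Z) ∘L Z) * (barP c g * transP c g) = 1 ∧
    (barP c g * transP c g) * ((1 : Hm →L[ℂ] Hm) - (adjoint Z) ∘L Z) = 1 := by
  obtain ⟨r1, r2, r3, r4⟩ := hs
  simp only [opTrans, transP, barM, barP] at r1 r2 r3 r4 hgbar hZdef ⊢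
  -- inverses of g and ḡ
  obtain ⟨gi, hg1, hg2⟩ : ∃ gi : Hp →L[ℂ] Hp, g ∘L gi = 1 ∧ gi ∘L g = 1 := by
    obtain ⟨G, hG⟩ := hg
    exact ⟨↑G⁻¹, by rw [← ContinuousLinearMap.mul_def, ← hG]; exact G.mul_inv,
      by rw [← ContinuousLinearMap.mul_def, ← hG]; exact G.inv_mul⟩
  obtain ⟨gbi, hb1, hb2⟩ : ∃ gbi : Hm →L[ℂ] Hm,
      opBar c c g ∘L gbi = 1 ∧ gbi ∘L opBar c c g = 1 := by
    obtain ⟨G, hG⟩ := hgbar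
    exact ⟨↑G⁻¹, by rw [← ContinuousLinearMap.mul_def, ← hG]; exact G.mul_inv,
      by rw [← ContinuousLinearMap.mul_def, ← hG]; exact G.inv_mul⟩
  have ha1 : adjoint g ∘L adjoint gi = 1 := adjoint_inv_pair hg2
  have ha2 : adjoint gi ∘L adjoint g = 1 := adjoint_inv_pair hg1
  have hab1 : adjoint (opBar c c g) ∘L adjoint gbi = 1 := adjoint_inv_pair hb2
  have hab2 : adjoint gbi ∘L adjoint (opBar c c g) = 1 := adjoint_inv_pair hb1
  -- Ring.inverse facts
  have hri_g : Ring.inverse g = gi :=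
    ring_inverse_eq' (by rw [ContinuousLinearMap.mul_def]; exact hg1)
      (by rw [ContinuousLinearMap.mul_def]; exact hg2)
  have hri_gb : Ring.inverse (opBar c c g) = gbi :=
    ring_inverse_eq' (by rw [ContinuousLinearMap.mul_def]; exact hb1)
      (by rw [ContinuousLinearMap.mul_def]; exact hb2)
  have hri_ga : Ring.inverse (adjoint g) = adjoint gi :=
    ring_inverse_eq' (by rw [ContinuousLinearMap.mul_def]; exact ha1)
      (by rw [ContinuousLinearMap.mul_def]; exact ha2)
  -- involutivity facts
  have hbar_g : opBar c.symm c.symm (opBar c c g) = g := opBar_opBar c c g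
  have hbar_h : opBar c c.symm (opBar c.symm c h) = h := by
    simpa using opBar_opBar c.symm c h
  -- barred relation 1 :  gᵀ ḡ - h* h = 1
  have br1 : adjoint (opBar c c g) ∘L opBar c c g - adjoint h ∘L h = 1 := by
    have ha' : opBar c.symm c (adjoint (opBar c.symm c h)) = adjoint h := by
      have e := adjoint_opBar c c.symm (opBar c.symm c h)
      rw [hbar_h] at e
      exact e.symm
    have e := congrArg (opBar c c) r1
    rw [opBar_sub, opBar_one, opBar_comp c c c (adjoint g) g,
      opBar_comp c c.symm c (adjoint (opBar c.symm c h)) (opBar c.symm c h),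
      ← adjoint_opBar c c g, ha', hbar_h] at e
    exact e
  -- barred relation 3 :  ḡ ḡ* - h̄ h̄* = 1
  have br3 : opBar c c g ∘L adjoint (opBar c c g)
      - opBar c.symm c h ∘L adjoint (opBar c.symm c h) = 1 := by
    have e := congrArg (opBar c c) r3
    rw [opBar_sub, opBar_one, opBar_comp c c c g (adjoint g),
      opBar_comp c c.symm c h (adjoint h),
      ← adjoint_opBar c c g, ← adjoint_opBar c.symm c h] at e
    exact e
  -- adjoint of relation 4 :  h̄ g* = ḡ h*
  have ar4 : opBar c.symm c h ∘L adjoint g = opBar c c g ∘L adjoint h := by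
    have e := congrArg adjoint r4
    rw [ContinuousLinearMap.adjoint_comp, ContinuousLinearMap.adjoint_comp,
      adjoint_adjoint, adjoint_adjoint] at e
    exact e
  -- bar of the inverse of ḡ is the inverse of g
  have hgw : g ∘L opBar c.symm c.symm gbi = 1 := by
    conv_lhs => rw [← hbar_g]
    rw [← opBar_comp c.symm c.symm c.symm (opBar c c g) gbi, hb1, opBar_one]
  have hw : opBar c.symm c.symm gbi = gi := by
    calc opBar c.symm c.symm gbi = 1 ∘L opBar c.symm c.symm gbi := (clm_one_comp _).symm
      _ = (gi ∘L g) ∘L opBar c.symm c.symm gbi := by rw [hg2]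
      _ = gi ∘L (g ∘L opBar c.symm c.symm gbi) := ContinuousLinearMap.comp_assoc _ _ _
      _ = gi ∘L 1 := by rw [hgw]
      _ = gi := clm_comp_one _
  -- Z and its conjugate / adjoint
  have hZ : Z = h ∘L gbi := by rw [hZdef, hri_gb]
  have hZbar : opBar c.symm c Z = opBar c.symm c h ∘L gi := by
    rw [hZ, opBar_comp c.symm c.symm c h gbi, hw]
  have hZa : adjoint Z = adjoint gbi ∘L adjoint h := by
    rw [hZ, ContinuousLinearMap.adjoint_comp]
  -- massaged relations
  have r1' : adjoint (opBar c.symm c h) ∘L opBar c.symm c h = adjoint g ∘L g - 1 :=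
    sub_flip_helper r1
  have br1' : adjoint h ∘L h = adjoint (opBar c c g) ∘L opBar c c g - 1 :=
    sub_flip_helper br1
  have br3' : opBar c.symm c h ∘L adjoint (opBar c.symm c h)
      = opBar c c g ∘L adjoint (opBar c c g) - 1 := sub_flip_helper br3
  -- key computation s1 : g* (h ḡ⁻¹) = hᵀ
  have s1 : adjoint g ∘L (h ∘L gbi) = adjoint (opBar c.symm c h) := by
    rw [← ContinuousLinearMap.comp_assoc, r2, ContinuousLinearMap.comp_assoc, hb1,
      clm_comp_one]
  -- claim A
  have s2 : adjoint g ∘L ((h ∘L gbi) ∘L (opBar c.symm c h ∘L gi)) = adjoint g - gi := by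
    rw [← ContinuousLinearMap.comp_assoc (adjoint g) (h ∘L gbi) (opBar c.symm c h ∘L gi),
      s1, ← ContinuousLinearMap.comp_assoc, r1', ContinuousLinearMap.sub_comp,
      ContinuousLinearMap.comp_assoc, hg1, clm_comp_one, clm_one_comp]
  have sA : (1 : Hp →L[ℂ] Hp) - Z ∘L opBar c.symm c Z = adjoint gi ∘L gi := by
    rw [hZbar, hZ]
    have e := congrArg (fun W => adjoint gi ∘L W) s2
    rw [ContinuousLinearMap.comp_sub,
      ← ContinuousLinearMap.comp_assoc (adjoint gi) (adjoint g)
        ((h ∘L gbi) ∘L (opBar c.symm c h ∘L gi)),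
      ha2, clm_one_comp] at e
    rw [e]
    abel
  refine ⟨?_, ?_, ?_⟩
  · rw [hri_ga, hri_g, ContinuousLinearMap.mul_def]
    exact sA
  -- claim B, right multiplication
  · have u1 : (h ∘L gbi) ∘L (opBar c c g ∘L adjoint (opBar c c g))
        = h ∘L adjoint (opBar c c g) := by
      rw [ContinuousLinearMap.comp_assoc h gbi _,
        ← ContinuousLinearMap.comp_assoc gbi (opBar c c g) (adjoint (opBar c c g)),
        hb2, clm_one_comp]
    have t1 : (adjoint Z ∘L Z) ∘L (opBar c c g ∘L adjoint (opBar c c g))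
        = opBar c c g ∘L adjoint (opBar c c g) - 1 := by
      rw [hZa, hZ]
      calc ((adjoint gbi ∘L adjoint h) ∘L (h ∘L gbi))
            ∘L (opBar c c g ∘L adjoint (opBar c c g))
          = (adjoint gbi ∘L adjoint h)
            ∘L ((h ∘L gbi) ∘L (opBar c c g ∘L adjoint (opBar c c g))) :=
            ContinuousLinearMap.comp_assoc _ _ _
        _ = (adjoint gbi ∘L adjoint h) ∘L (h ∘L adjoint (opBar c c g)) := by rw [u1]
        _ = adjoint gbi ∘L ((adjoint h ∘L h) ∘L adjoint (opBar c c g)) := by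
            rw [ContinuousLinearMap.comp_assoc,
              ← ContinuousLinearMap.comp_assoc (adjoint h) h (adjoint (opBar c c g))]
        _ = adjoint gbi ∘L ((adjoint (opBar c c g) ∘L opBar c c g - 1)
              ∘L adjoint (opBar c c g)) := by rw [br1']
        _ = adjoint gbi ∘L (adjoint (opBar c c g)
              ∘L (opBar c c g ∘L adjoint (opBar c c g)) - adjoint (opBar c c g)) := by
            rw [ContinuousLinearMap.sub_comp, clm_one_comp, ContinuousLinearMap.comp_assoc]
        _ = adjoint gbi ∘L (adjoint (opBar c c g)
              ∘L (opBar c c g ∘L adjoint (opBar c c g)))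
            - adjoint gbi ∘L adjoint (opBar c c g) := by
            rw [ContinuousLinearMap.comp_sub]
        _ = (adjoint gbi ∘L adjoint (opBar c c g))
              ∘L (opBar c c g ∘L adjoint (opBar c c g))
            - adjoint gbi ∘L adjoint (opBar c c g) := by
            rw [ContinuousLinearMap.comp_assoc]
        _ = opBar c c g ∘L adjoint (opBar c c g) - 1 := by rw [hab2, clm_one_comp]
    rw [ContinuousLinearMap.mul_def, ContinuousLinearMap.mul_def,
      ContinuousLinearMap.sub_comp, clm_one_comp, t1]
    abel
  -- claim B, left multiplication
  · have t2 : (opBar c c g ∘L adjoint (opBar c c g)) ∘L (adjoint Z ∘L Z)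
        = opBar c c g ∘L adjoint (opBar c c g) - 1 := by
      rw [hZa, hZ]
      calc (opBar c c g ∘L adjoint (opBar c c g))
            ∘L ((adjoint gbi ∘L adjoint h) ∘L (h ∘L gbi))
          = opBar c c g ∘L ((adjoint (opBar c c g)
              ∘L (adjoint gbi ∘L adjoint h)) ∘L (h ∘L gbi)) := by
            rw [ContinuousLinearMap.comp_assoc (opBar c c g) (adjoint (opBar c c g)) _,
              ← ContinuousLinearMap.comp_assoc (adjoint (opBar c c g))
                (adjoint gbi ∘L adjoint h) (h ∘L gbi)]
        _ = opBar c c g ∘L (((adjoint (opBar c c g) ∘L adjoint gbi)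
              ∘L adjoint h) ∘L (h ∘L gbi)) := by
            rw [← ContinuousLinearMap.comp_assoc (adjoint (opBar c c g))
              (adjoint gbi) (adjoint h)]
        _ = opBar c c g ∘L ((1 ∘L adjoint h) ∘L (h ∘L gbi)) := by rw [hab1]
        _ = (opBar c c g ∘L adjoint h) ∘L (h ∘L gbi) := by
            rw [clm_one_comp, ← ContinuousLinearMap.comp_assoc]
        _ = (opBar c.symm c h ∘L adjoint g) ∘L (h ∘L gbi) := by rw [← ar4]
        _ = opBar c.symm c h ∘L (adjoint g ∘L (h ∘L gbi)) :=
            ContinuousLinearMap.comp_assoc _ _ _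
        _ = opBar c.symm c h ∘L adjoint (opBar c.symm c h) := by rw [s1]
        _ = opBar c c g ∘L adjoint (opBar c c g) - 1 := br3'
    rw [ContinuousLinearMap.mul_def, ContinuousLinearMap.mul_def,
      ContinuousLinearMap.comp_sub, clm_comp_one, t2]
    abel
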